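/- Let (Ω, P) be a probability space, x, y : ℕ → Ω → ℝ sequences of measurable functions with each x_j y_k and each y_k integrable, and ρ : ℕ → ℝ with ρ_j > 0. Assume A := ∫_Ω ∑_j ρ_j⁻¹ x_j² dP < ∞ and B := ∫_Ω ∑_k y_k² dP < ∞. For j ∈ ℕ define g_j = ∑_k E[x_j y_k] E[y_k] (the series converges absolutely). Then ∑_j ρ_j⁻¹ g_j² ≤ A B². -/

import Mathlib

open MeasureTheory ENNReal

/-!
Cauchy–Schwarz in `L²(P)` gives `E[x_j y_k]² ≤ E[x_j²] E[y_k²]` and `E[y_k]² ≤ E[y_k²]`, so the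
sequences `(E[x_j y_k])_k` and `(E[y_k])_k` lie in `ℓ²` with squared norms at most `E[x_j²] B`
and `B`. Cauchy–Schwarz in `ℓ²` then gives absolute convergence of `g_j` and
`g_j² ≤ E[x_j²] B²`; summing against `ρ_j⁻¹` yields `A B²`.
-/

namespace ENNReal

theorem lintegral_mul_sq_le {α : Type*} [MeasurableSpace α] {μ : Measure α} {f g : α → ℝ≥0∞}
    (hf : AEMeasurable f μ) (hg : AEMeasurable g μ) :
    (∫⁻ a, f a * g a ∂μ) ^ 2 ≤ (∫⁻ a, f a ^ 2 ∂μ) * ∫⁻ a, g a ^ 2 ∂μ := by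
  have holder := lintegral_mul_le_Lp_mul_Lq μ Real.HolderConjugate.two_two hf hg
  simp only [Pi.mul_apply, ENNReal.rpow_two] at holder
  calc (∫⁻ a, f a * g a ∂μ) ^ 2
      ≤ ((∫⁻ a, f a ^ 2 ∂μ) ^ (1 / 2 : ℝ) * (∫⁻ a, g a ^ 2 ∂μ) ^ (1 / 2 : ℝ)) ^ 2 := by
        gcongr
    _ = (∫⁻ a, f a ^ 2 ∂μ) * ∫⁻ a, g a ^ 2 ∂μ := by
        rw [mul_pow, ← ENNReal.rpow_natCast, ← ENNReal.rpow_natCast, ← ENNReal.rpow_mul,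
          ← ENNReal.rpow_mul]
        norm_num

theorem tsum_mul_sq_le {ι : Type*} (u v : ι → ℝ≥0∞) :
    (∑' i, u i * v i) ^ 2 ≤ (∑' i, u i ^ 2) * ∑' i, v i ^ 2 := by
  let _ : MeasurableSpace ι := ⊤
  simpa only [lintegral_count' measurable_from_top] using
    lintegral_mul_sq_le (μ := Measure.count) measurable_from_top.aemeasurable
      measurable_from_top.aemeasurable

theorem ofReal_mul_sq (r t : ℝ) : ENNReal.ofReal (r * t ^ 2) = ENNReal.ofReal r * ‖t‖ₑ ^ 2 := by
  rw [ENNReal.ofReal_mul' (sq_nonneg t), ← enorm_pow, Real.enorm_of_nonneg (sq_nonneg t)]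

theorem ofReal_sq (t : ℝ) : ENNReal.ofReal (t ^ 2) = ‖t‖ₑ ^ 2 := by
  simpa using ofReal_mul_sq 1 t

end ENNReal

section
variable {α 𝕜 : Type*} [MeasurableSpace α] {μ : Measure α} [RCLike 𝕜]

theorem enorm_integral_mul_sq_le {f g : α → 𝕜} (hf : AEMeasurable f μ) (hg : AEMeasurable g μ) :
    ‖∫ a, f a * g a ∂μ‖ₑ ^ 2 ≤ (∫⁻ a, ‖f a‖ₑ ^ 2 ∂μ) * ∫⁻ a, ‖g a‖ₑ ^ 2 ∂μ := by
  calc ‖∫ a, f a * g a ∂μ‖ₑ ^ 2 ≤ (∫⁻ a, ‖f a‖ₑ * ‖g a‖ₑ ∂μ) ^ 2 := by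
        simpa only [enorm_mul] using pow_le_pow_left₀ zero_le
          (enorm_integral_le_lintegral_enorm (μ := μ) fun a => f a * g a) 2
    _ ≤ _ := ENNReal.lintegral_mul_sq_le hf.enorm hg.enorm

theorem enorm_integral_sq_le [IsProbabilityMeasure μ] {f : α → 𝕜} (hf : AEMeasurable f μ) :
    ‖∫ a, f a ∂μ‖ₑ ^ 2 ≤ ∫⁻ a, ‖f a‖ₑ ^ 2 ∂μ := by
  simpa using enorm_integral_mul_sq_le (g := fun _ => (1 : 𝕜)) hf aemeasurable_const

end

section
variable {ι 𝕜 : Type*} [RCLike 𝕜]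

theorem enorm_tsum_mul_sq_le (a c : ι → 𝕜) :
    ‖∑' i, a i * c i‖ₑ ^ 2 ≤ (∑' i, ‖a i‖ₑ ^ 2) * ∑' i, ‖c i‖ₑ ^ 2 := by
  calc ‖∑' i, a i * c i‖ₑ ^ 2 ≤ (∑' i, ‖a i‖ₑ * ‖c i‖ₑ) ^ 2 := by
        simpa only [enorm_mul] using pow_le_pow_left₀ zero_le
          (enorm_tsum_le_tsum_enorm (f := fun i => a i * c i)) 2
    _ ≤ _ := ENNReal.tsum_mul_sq_le _ _

theorem summable_norm_mul_of_tsum_enorm_sq_ne_top {a c : ι → 𝕜}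
    (ha : ∑' i, ‖a i‖ₑ ^ 2 ≠ ∞) (hc : ∑' i, ‖c i‖ₑ ^ 2 ≠ ∞) :
    Summable fun i => ‖a i * c i‖ := by
  have hsq := ne_top_of_le_ne_top (mul_ne_top ha hc) (ENNReal.tsum_mul_sq_le _ _)
  rw [← tsum_enorm_ne_top_iff_summable_norm]
  simpa [enorm_mul, pow_ne_top_iff] using hsq

end

theorem term_III_bound_general
    {Ω : Type*} [MeasurableSpace Ω] (P : Measure Ω) [IsProbabilityMeasure P]
    (x y : ℕ → Ω → ℝ)
    (hxm : ∀ j, Measurable (x j)) (hym : ∀ k, Measurable (y k))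
    (ρ : ℕ → ℝ) (hρ : ∀ j, 0 < ρ j)
    (A B : ℝ≥0∞)
    (hA : A = ∫⁻ ω, ∑' (j : ℕ), ENNReal.ofReal ((ρ j)⁻¹ * (x j ω) ^ 2) ∂P)
    (hAfin : A ≠ ⊤)
    (hB : B = ∫⁻ ω, ∑' (k : ℕ), ENNReal.ofReal ((y k ω) ^ 2) ∂P)
    (hBfin : B ≠ ⊤) :
    (∀ j : ℕ, Summable (fun k : ℕ =>
        |(∫ ω, x j ω * y k ω ∂P) * (∫ ω, y k ω ∂P)|))
      ∧ ∑' (j : ℕ),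
          ENNReal.ofReal ((ρ j)⁻¹ *
            (∑' k : ℕ, (∫ ω, x j ω * y k ω ∂P) * (∫ ω, y k ω ∂P)) ^ 2)
        ≤ A * B ^ 2 := by
  set X : ℕ → ℝ≥0∞ := fun j => ∫⁻ ω, ‖x j ω‖ₑ ^ 2 ∂P
  have hA' : A = ∑' j, ENNReal.ofReal (ρ j)⁻¹ * X j := by
    simp_rw [hA, ENNReal.ofReal_mul_sq]
    rw [lintegral_tsum fun j => by fun_prop]
    exact tsum_congr fun j => lintegral_const_mul _ (by fun_prop)
  have hB' : B = ∑' k, ∫⁻ ω, ‖y k ω‖ₑ ^ 2 ∂P := by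
    simp_rw [hB, ENNReal.ofReal_sq]
    exact lintegral_tsum fun k => by fun_prop
  have hX : ∀ j, X j ≠ ∞ := fun j htop => by
    have hle : ENNReal.ofReal (ρ j)⁻¹ * X j ≤ A := hA' ▸ ENNReal.le_tsum j
    simp [htop, hρ j, hAfin] at hle
  have hxy : ∀ j, ∑' k, ‖∫ ω, x j ω * y k ω ∂P‖ₑ ^ 2 ≤ X j * B := fun j => by
    rw [hB', ← ENNReal.tsum_mul_left]
    exact ENNReal.tsum_le_tsum fun k =>
      enorm_integral_mul_sq_le (hxm j).aemeasurable (hym k).aemeasurable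
  have hy : ∑' k, ‖∫ ω, y k ω ∂P‖ₑ ^ 2 ≤ B :=
    hB' ▸ ENNReal.tsum_le_tsum fun k => enorm_integral_sq_le (hym k).aemeasurable
  refine ⟨fun j => ?_, ?_⟩
  · simpa only [Real.norm_eq_abs] using summable_norm_mul_of_tsum_enorm_sq_ne_top
      (ne_top_of_le_ne_top (mul_ne_top (hX j) hBfin) (hxy j)) (ne_top_of_le_ne_top hBfin hy)
  calc _ = ∑' j, ENNReal.ofReal (ρ j)⁻¹ *
          ‖∑' k, (∫ ω, x j ω * y k ω ∂P) * ∫ ω, y k ω ∂P‖ₑ ^ 2 := by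
        simp_rw [ENNReal.ofReal_mul_sq]
    _ ≤ ∑' j, ENNReal.ofReal (ρ j)⁻¹ * (X j * B * B) := by
        gcongr with j
        exact (enorm_tsum_mul_sq_le _ _).trans (mul_le_mul' (hxy j) hy)
    _ = A * B ^ 2 := by
        rw [hA', ← ENNReal.tsum_mul_right]
        exact tsum_congr fun j => by ring

/-- The bound for term III in the proof of Theorem 1: with
`A = E‖X‖²_{H(K)} = ∫ ∑_j ρ_j⁻¹ x_j² dP < ∞` and `B = E‖Y‖²_{L₂} = ∫ ∑_k y_k² dP < ∞`,
the coefficients `g_j = ∑_k E[x_j y_k] E[y_k]` (the series converging absolutely)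
satisfy `∑_j ρ_j⁻¹ g_j² ≤ A B²`. -/
theorem term_III_bound
    {Ω : Type*} [MeasurableSpace Ω] (P : Measure Ω) [IsProbabilityMeasure P]
    (x y : ℕ → Ω → ℝ)
    (hxm : ∀ j, Measurable (x j)) (hym : ∀ k, Measurable (y k))
    (hxyi : ∀ j k, Integrable (fun ω => x j ω * y k ω) P)
    (hyi : ∀ k, Integrable (y k) P)
    (ρ : ℕ → ℝ) (hρ : ∀ j, 0 < ρ j)
    (A B : ℝ≥0∞)
    (hA : A = ∫⁻ ω, ∑' (j : ℕ), ENNReal.ofReal ((ρ j)⁻¹ * (x j ω) ^ 2) ∂P)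
    (hAfin : A ≠ ⊤)
    (hB : B = ∫⁻ ω, ∑' (k : ℕ), ENNReal.ofReal ((y k ω) ^ 2) ∂P)
    (hBfin : B ≠ ⊤) :
    (∀ j : ℕ, Summable (fun k : ℕ =>
        |(∫ ω, x j ω * y k ω ∂P) * (∫ ω, y k ω ∂P)|))
      ∧ ∑' (j : ℕ),
          ENNReal.ofReal ((ρ j)⁻¹ *
            (∑' k : ℕ, (∫ ω, x j ω * y k ω ∂P) * (∫ ω, y k ω ∂P)) ^ 2)
        ≤ A * B ^ 2 :=
  term_III_bound_general P x y hxm hym ρ hρ A B hA hAfin hB hBfin
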